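/- Given F₁ : X → X and F₂ : X² → X, there exists an associative ε-standard operation G : X* → X ∪ {ε} with G₁ = F₁ and G₂ = F₂ if and only if: F₁∘F₁ = F₁, F₁∘F₂ = F₂, F₂(xy) = F₂(F₁(x)y) = F₂(xF₁(y)), and F₂ is associative. Such G is unique and determined by Gₙ = G₂ ∘ (Gₙ₋₁, id) for n ≥ 3. -/
import Mathlib

/-- Associativity of a variadic operation: `G(xyz) = G(x G(y) z)`. -/
def VarAssoc {X : Type*} (G : List X → Option X) : Prop :=
  ∀ x y z : List X, G (x ++ y ++ z) = G (x ++ (G y).toList ++ z)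

/-- `G` is ε-standard. -/
def EpsStandard {X : Type*} (G : List X → Option X) : Prop :=
  (∀ x : List X, G x = G [] → x = []) ∧ G [] = none

section aux
variable {X : Type*} (F₁ : X → X) (F₂ : X → X → X)

/-- The canonical candidate extension. -/
def Gcand : List X → Option X
  | [] => none
  | a :: t => some (F₁ (List.foldl F₂ a t))

lemma foldl_assoc (h4 : ∀ a b c : X, F₂ (F₂ a b) c = F₂ a (F₂ b c)) :
    ∀ (t : List X) (a b : X), List.foldl F₂ (F₂ a b) t = F₂ a (List.foldl F₂ b t) := by
  intro t
  induction t with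
  | nil => intro a b; rfl
  | cons c t ih =>
    intro a b
    simp only [List.foldl_cons, h4, ih]

/-- Any associative ε-standard `G` with the given unary and binary parts equals `Gcand`
on nonempty lists. -/
lemma Gchar (G : List X → Option X) (hA : VarAssoc G)
    (hG1 : ∀ a : X, G [a] = some (F₁ a)) (hG2 : ∀ a b : X, G [a, b] = some (F₂ a b)) :
    ∀ (t : List X) (a : X), G (a :: t) = some (F₁ (List.foldl F₂ a t)) := by
  -- derived properties
  have h2 : ∀ a b : X, F₁ (F₂ a b) = F₂ a b := by
    intro a b
    have := hA [] [a, b] []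
    simp only [List.nil_append, List.append_nil, hG2] at this
    simpa [hG1, hG2] using this.symm
  have h3l : ∀ a b : X, F₂ (F₁ a) b = F₂ a b := by
    intro a b
    have := hA [] [a] [b]
    simp only [List.nil_append, hG1] at this
    have : G [a, b] = G [F₁ a, b] := by simpa using this
    rw [hG2, hG2] at this
    exact (Option.some_injective _ this).symm
  intro t
  induction t using List.reverseRecOn with
  | nil => intro a; simpa using hG1 a
  | append_singleton s d ih =>
    intro a
    have key := hA [] (a :: s) [d]
    simp only [List.nil_append, ih] at key
    have : G (a :: (s ++ [d])) = G [F₁ (List.foldl F₂ a s), d] := by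
      simpa using key
    rw [this, hG2, h3l, List.foldl_append]
    simp [h2]

lemma Gcand_varAssoc
    (h1 : ∀ a : X, F₁ (F₁ a) = F₁ a)
    (h2 : ∀ a b : X, F₁ (F₂ a b) = F₂ a b)
    (h3l : ∀ a b : X, F₂ a b = F₂ (F₁ a) b)
    (h3r : ∀ a b : X, F₂ a b = F₂ a (F₁ b))
    (h4 : ∀ a b c : X, F₂ (F₂ a b) c = F₂ a (F₂ b c)) :
    VarAssoc (Gcand F₁ F₂) := by
  intro x y z
  cases y with
  | nil => simp [Gcand]
  | cons a t =>
    have hy : ((Gcand F₁ F₂ (a :: t)).toList) = [F₁ (List.foldl F₂ a t)] := rfl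
    rw [hy]
    cases x with
    | nil =>
      cases z with
      | nil =>
        simp only [List.nil_append, List.append_nil, Gcand, Option.some.injEq]
        exact (h1 _).symm
      | cons d z' =>
        simp only [List.nil_append, List.cons_append, List.singleton_append, Gcand,
          List.foldl_append, List.foldl_cons, Option.some.injEq]
        rw [← h3l]
    | cons e x' =>
      simp only [List.cons_append, Gcand, Option.some.injEq, List.foldl_append,
        List.foldl_cons, List.singleton_append]
      rw [foldl_assoc F₂ h4, ← h3r]
      simp only [List.foldl_nil]

end aux

/-- `F₁, F₂` are the unary and binary parts of some associative
ε-standard operation `G` iff `F₁∘F₁ = F₁`, `F₁∘F₂ = F₂`,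
`F₂(xy) = F₂(F₁(x)y) = F₂(xF₁(y))`, and `F₂` is associative; such a `G` is
unique and determined by `Gₙ = G₂ ∘ (Gₙ₋₁, id)` for `n ≥ 3`. -/
theorem assoc_extension_characterization {X : Type*} [Nonempty X]
    (F₁ : X → X) (F₂ : X → X → X) :
    ((∃ G : List X → Option X, EpsStandard G ∧ VarAssoc G ∧
        (∀ a : X, G [a] = some (F₁ a)) ∧
        (∀ a b : X, G [a, b] = some (F₂ a b))) ↔
      ((∀ a : X, F₁ (F₁ a) = F₁ a) ∧
        (∀ a b : X, F₁ (F₂ a b) = F₂ a b) ∧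
        (∀ a b : X, F₂ a b = F₂ (F₁ a) b ∧ F₂ a b = F₂ a (F₁ b)) ∧
        (∀ a b c : X, F₂ (F₂ a b) c = F₂ a (F₂ b c)))) ∧
    -- uniqueness
    (∀ G G' : List X → Option X,
      EpsStandard G → VarAssoc G → (∀ a : X, G [a] = some (F₁ a)) →
        (∀ a b : X, G [a, b] = some (F₂ a b)) →
      EpsStandard G' → VarAssoc G' → (∀ a : X, G' [a] = some (F₁ a)) →
        (∀ a b : X, G' [a, b] = some (F₂ a b)) → G = G') ∧
    -- determination: Gₙ = G₂ ∘ (Gₙ₋₁, id) for n ≥ 3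
    (∀ G : List X → Option X,
      EpsStandard G → VarAssoc G → (∀ a : X, G [a] = some (F₁ a)) →
        (∀ a b : X, G [a, b] = some (F₂ a b)) →
      ∀ (x : List X) (a : X), 2 ≤ x.length →
        G (x ++ [a]) = (G x).bind (fun b => G [b, a])) := by
  refine ⟨⟨?_, ?_⟩, ?_, ?_⟩
  · -- forward direction of iff
    rintro ⟨G, hE, hA, hG1, hG2⟩
    have key := Gchar F₁ F₂ G hA hG1 hG2
    have h1 : ∀ a : X, F₁ (F₁ a) = F₁ a := by
      intro a
      have := hA [] [a] []
      simp only [List.nil_append, List.append_nil] at this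
      have h : G [a] = G [F₁ a] := by rw [this, hG1]; rfl
      rw [hG1, hG1] at h
      exact (Option.some_injective _ h).symm
    have h2 : ∀ a b : X, F₁ (F₂ a b) = F₂ a b := by
      intro a b
      have := hA [] [a, b] []
      simp only [List.nil_append, List.append_nil] at this
      have h : G [a, b] = G [F₂ a b] := by rw [this, hG2]; rfl
      rw [hG2, hG1] at h
      exact (Option.some_injective _ h).symm
    have h3l : ∀ a b : X, F₂ a b = F₂ (F₁ a) b := by
      intro a b
      have := hA [] [a] [b]
      simp only [List.nil_append, hG1] at this
      have : G [a, b] = G [F₁ a, b] := by simpa using this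
      rw [hG2, hG2] at this
      exact Option.some_injective _ this
    have h3r : ∀ a b : X, F₂ a b = F₂ a (F₁ b) := by
      intro a b
      have := hA [a] [b] []
      simp only [List.append_nil, hG1] at this
      have : G [a, b] = G [a, F₁ b] := by simpa using this
      rw [hG2, hG2] at this
      exact Option.some_injective _ this
    have h4 : ∀ a b c : X, F₂ (F₂ a b) c = F₂ a (F₂ b c) := by
      intro a b c
      have e1 := hA [] [a, b] [c]
      simp only [List.nil_append, hG2] at e1
      have e1' : G [a, b, c] = G [F₂ a b, c] := by simpa using e1
      have e2 := hA [a] [b, c] []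
      simp only [List.append_nil, hG2] at e2
      have e2' : G [a, b, c] = G [a, F₂ b c] := by simpa using e2
      rw [e1'] at e2'
      rw [hG2, hG2] at e2'
      exact Option.some_injective _ e2'
    exact ⟨h1, h2, fun a b => ⟨h3l a b, h3r a b⟩, h4⟩
  · -- backward direction: construct Gcand
    rintro ⟨h1, h2, h3, h4⟩
    refine ⟨Gcand F₁ F₂, ⟨?_, rfl⟩, ?_, ?_, ?_⟩
    · intro x hx
      cases x with
      | nil => rfl
      | cons a t => simp [Gcand] at hx
    · exact Gcand_varAssoc F₁ F₂ h1 h2 (fun a b => (h3 a b).1) (fun a b => (h3 a b).2) h4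
    · intro a; rfl
    · intro a b; simp [Gcand, h2]
  · -- uniqueness
    intro G G' hE hA hG1 hG2 hE' hA' hG1' hG2'
    funext l
    cases l with
    | nil => rw [hE.2, hE'.2]
    | cons a t => rw [Gchar F₁ F₂ G hA hG1 hG2, Gchar F₁ F₂ G' hA' hG1' hG2']
  · -- determination
    intro G hE hA hG1 hG2 x a hx
    have hxne : G x ≠ none := by
      intro h
      have := hE.1 x (by rw [h, hE.2])
      subst this; simp at hx
    obtain ⟨b, hb⟩ := Option.ne_none_iff_exists'.mp hxne
    have := hA [] x [a]
    simp only [List.nil_append, hb] at this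
    rw [this, hb]
    rfl
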